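/- If φ : D → M D' is Scott continuous, then sp(φ) is homogeneous: sp(φ)(α ⊙̄ m) = α ⊙̄ sp(φ)(m) for all α ∈ L and m ∈ M D; combined with join preservation, sp(φ) is a linear map of (L,⊕,*)-semimodules. -/

import Mathlib

open Classical

variable {D D' L : Type*}

/-- `a` is way below `b`. -/
def WayBelow [Preorder D] (a b : D) : Prop :=
  ∀ S : Set D, S.Nonempty → DirectedOn (· ≤ ·) S → ∀ s : D, IsLUB S s → b ≤ s → ∃ c ∈ S, a ≤ c

/-- Directed-complete poset. -/
def IsDCPO (D : Type*) [Preorder D] : Prop :=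
  ∀ S : Set D, S.Nonempty → DirectedOn (· ≤ ·) S → ∃ s : D, IsLUB S s

/-- A domain: a continuous directed-complete poset. -/
def IsFuzzyDomain (D : Type*) [Preorder D] : Prop :=
  IsDCPO D ∧ ∀ b : D, DirectedOn (· ≤ ·) {a | WayBelow a b} ∧ IsLUB {a | WayBelow a b} b

/-- An `L`-fuzzy monotonic predicate on `D`: an antitone map sending directed
suprema in `D` to infima in `L` (i.e. a Scott-continuous map `D → Lᵒᵖ`). -/
def IsMonPred [Preorder D] [CompleteLattice L] (m : D → L) : Prop :=
  Antitone m ∧ ∀ S : Set D, S.Nonempty → DirectedOn (· ≤ ·) S →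
    ∀ s : D, IsLUB S s → m s = ⨅ c ∈ S, m c

/-- `η d₀` sends `d` to `1` if `d ≤ d₀` and to `0` otherwise. -/
noncomputable def eta [Preorder D] (L : Type*) [CompleteLattice L] (d₀ : D) : D → L :=
  fun d => if d ≤ d₀ then ⊤ else ⊥

/-- `f^u b = ⨅ { f a ∣ a ≪ b }`, the monotonic-predicate hull. -/
noncomputable def uHull [Preorder D] [CompleteLattice L] (f : D → L) : D → L :=
  fun b => ⨅ a ∈ {a | WayBelow a b}, f a

/-- `α ⊙̄ m = (α * m)^u`. -/
noncomputable def smulMP [Preorder D] [CompleteLattice L] (mul : L → L → L)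
    (α : L) (m : D → L) : D → L :=
  uHull (fun d => mul α (m d))

/-- Strongest postcondition transformer:
`sp(φ)(m)(b) = ⨅_{b' ≪ b} ⨆_{a} m a * φ a b'`. -/
noncomputable def sp [Preorder D] [Preorder D'] [CompleteLattice L]
    (mul : L → L → L) (φ : D → D' → L) (m : D → L) : D' → L :=
  fun b => ⨅ b' ∈ {b' | WayBelow b' b}, ⨆ a : D, mul (m a) (φ a b')

/-- Scott continuity of `φ : D → M D'`: `φ` sends a directed supremum in `D`
to the supremum of the image in the poset of monotonic predicates on `D'`. -/
def ScottContTo [Preorder D] [Preorder D'] [CompleteLattice L] (φ : D → D' → L) : Prop :=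
  ∀ S : Set D, S.Nonempty → DirectedOn (· ≤ ·) S → ∀ s : D, IsLUB S s →
    (∀ d ∈ S, φ d ≤ φ s) ∧ ∀ m : D' → L, IsMonPred m → (∀ d ∈ S, φ d ≤ m) → φ s ≤ m

section Aux

theorem wb_le [Preorder D] {a b : D} (h : WayBelow a b) : a ≤ b := by
  obtain ⟨c, hc, hac⟩ := h {b} ⟨b, rfl⟩ (directedOn_singleton (r := (· ≤ ·)) b)
    b isLUB_singleton le_rfl
  simp only [Set.mem_singleton_iff] at hc
  exact hc ▸ hac

theorem wb_mono_left [Preorder D] {a' a b : D} (h : a' ≤ a) (hab : WayBelow a b) :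
    WayBelow a' b := by
  intro S hne hdir s hlub hbs
  obtain ⟨c, hc, hac⟩ := hab S hne hdir s hlub hbs
  exact ⟨c, hc, h.trans hac⟩

theorem wb_mono_right [Preorder D] {a b c : D} (hab : WayBelow a b) (h : b ≤ c) :
    WayBelow a c := by
  intro S hne hdir s hlub hcs
  exact hab S hne hdir s hlub (h.trans hcs)

theorem wb_nonempty [Preorder D] (hD : IsFuzzyDomain D) (b : D) :
    {a : D | WayBelow a b}.Nonempty := by
  by_contra h
  rw [Set.not_nonempty_iff_eq_empty] at h
  have hlub := (hD.2 b).2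
  rw [h] at hlub
  have hleast : ∀ u : D, b ≤ u := fun u => hlub.2 (fun x hx => hx.elim)
  have hbb : WayBelow b b := by
    intro S hne hdir s hlubS hbs
    obtain ⟨c, hc⟩ := hne
    exact ⟨c, hc, hleast c⟩
  have : b ∈ ({a : D | WayBelow a b} : Set D) := hbb
  rw [h] at this
  exact this

theorem wb_interp [Preorder D] (hD : IsFuzzyDomain D) {a b : D} (h : WayBelow a b) :
    ∃ c, WayBelow a c ∧ WayBelow c b := by
  set S : Set D := {x | ∃ y, WayBelow x y ∧ WayBelow y b} with hS
  have hne : S.Nonempty := by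
    obtain ⟨y, hy⟩ := wb_nonempty hD b
    obtain ⟨x, hx⟩ := wb_nonempty hD y
    exact ⟨x, y, hx, hy⟩
  have hdir : DirectedOn (· ≤ ·) S := by
    rintro x₁ ⟨y₁, hx₁, hy₁⟩ x₂ ⟨y₂, hx₂, hy₂⟩
    obtain ⟨y₃, hy₃, h13, h23⟩ := (hD.2 b).1 y₁ hy₁ y₂ hy₂
    obtain ⟨x₃, hx₃, g13, g23⟩ := (hD.2 y₃).1 x₁ (wb_mono_right hx₁ h13) x₂ (wb_mono_right hx₂ h23)
    exact ⟨x₃, ⟨y₃, hx₃, hy₃⟩, g13, g23⟩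
  have hlub : IsLUB S b := by
    constructor
    · rintro x ⟨y, hxy, hyb⟩
      exact (wb_le hxy).trans (wb_le hyb)
    · intro u hu
      apply (hD.2 b).2.2
      intro y hy
      apply (hD.2 y).2.2
      intro x hx
      exact hu ⟨y, hx, hy⟩
  obtain ⟨c, hcS, hac⟩ := h S hne hdir b hlub le_rfl
  obtain ⟨y, hcy, hyb⟩ := hcS
  exact ⟨y, wb_mono_left hac hcy, hyb⟩

variable [CompleteLattice L]

theorem uHull_le [Preorder D] {g : D → L} {a b : D} (h : WayBelow a b) :
    uHull g b ≤ g a := by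
  simp only [uHull]
  exact iInf_le_of_le a (iInf_le _ h)

theorem le_uHull [Preorder D] {g : D → L} {x : L} {b : D}
    (h : ∀ a, WayBelow a b → x ≤ g a) : x ≤ uHull g b := by
  simp only [uHull]
  exact le_iInf₂ h

theorem smulMP_le [Preorder D] {mul : L → L → L} {α : L} {m : D → L} {a' a : D}
    (h : WayBelow a' a) : smulMP mul α m a ≤ mul α (m a') :=
  uHull_le h

theorem le_smulMP [Preorder D] {mul : L → L → L} {α : L} {m : D → L} {x : L} {a : D}
    (h : ∀ a', WayBelow a' a → x ≤ mul α (m a')) : x ≤ smulMP mul α m a :=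
  le_uHull h

theorem sp_le [Preorder D] [Preorder D'] {mul : L → L → L} {φ : D → D' → L}
    {m : D → L} {b' b : D'} (h : WayBelow b' b) :
    sp mul φ m b ≤ ⨆ a : D, mul (m a) (φ a b') := by
  simp only [sp]
  exact iInf_le_of_le b' (iInf_le _ h)

theorem le_sp [Preorder D] [Preorder D'] {mul : L → L → L} {φ : D → D' → L}
    {m : D → L} {x : L} {b : D'}
    (h : ∀ b', WayBelow b' b → x ≤ ⨆ a : D, mul (m a) (φ a b')) : x ≤ sp mul φ m b := by
  simp only [sp]
  exact le_iInf₂ h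

theorem mul_iSup' {mul : L → L → L}
    (hsup₁ : ∀ (a : L) (S : Set L), mul a (sSup S) = ⨆ b ∈ S, mul a b)
    (a : L) {ι : Sort*} (f : ι → L) : mul a (⨆ i, f i) = ⨆ i, mul a (f i) := by
  rw [← sSup_range, hsup₁, iSup_range]

theorem mul_mono_right {mul : L → L → L}
    (hsup₁ : ∀ (a : L) (S : Set L), mul a (sSup S) = ⨆ b ∈ S, mul a b)
    {a b c : L} (h : b ≤ c) : mul a b ≤ mul a c := by
  have h1 : sSup ({b, c} : Set L) = c := by rw [sSup_pair, sup_eq_right.mpr h]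
  calc mul a b ≤ ⨆ x ∈ ({b, c} : Set L), mul a x :=
        le_iSup₂ (f := fun (x : L) (_ : x ∈ ({b, c} : Set L)) => mul a x) b (by simp)
    _ = mul a (sSup {b, c}) := (hsup₁ a _).symm
    _ = mul a c := by rw [h1]

theorem mul_mono_left {mul : L → L → L}
    (hsup₂ : ∀ (a : L) (S : Set L), mul (sSup S) a = ⨆ b ∈ S, mul b a)
    {a b c : L} (h : b ≤ c) : mul b a ≤ mul c a := by
  have h1 : sSup ({b, c} : Set L) = c := by rw [sSup_pair, sup_eq_right.mpr h]
  calc mul b a ≤ ⨆ x ∈ ({b, c} : Set L), mul x a :=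
        le_iSup₂ (f := fun (x : L) (_ : x ∈ ({b, c} : Set L)) => mul x a) b (by simp)
    _ = mul (sSup {b, c}) a := (hsup₂ a _).symm
    _ = mul c a := by rw [h1]

theorem uHull_monpred [Preorder D] (hD : IsFuzzyDomain D) (g : D → L) :
    IsMonPred (uHull (L := L) g) := by
  constructor
  · intro b₁ b₂ h
    exact le_uHull fun a ha => uHull_le (wb_mono_right ha h)
  · intro S hne hdir s hlub
    apply le_antisymm
    · refine le_iInf₂ fun c hc => ?_
      exact le_uHull fun a ha => uHull_le (wb_mono_right ha (hlub.1 hc))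
    · refine le_uHull fun a ha => ?_
      obtain ⟨a₁, ha1, h1s⟩ := wb_interp hD ha
      obtain ⟨c, hcS, h1c⟩ := h1s S hne hdir s hlub le_rfl
      calc (⨅ c ∈ S, uHull (L := L) g c) ≤ uHull (L := L) g c := iInf_le_of_le c (iInf_le _ hcS)
        _ ≤ g a := uHull_le (wb_mono_right ha1 h1c)

theorem monpred_inf [Preorder D] (hD : IsFuzzyDomain D) {m : D → L}
    (hm : IsMonPred m) (b : D) : m b = ⨅ a ∈ {a | WayBelow a b}, m a :=
  hm.2 _ (wb_nonempty hD b) (hD.2 b).1 b (hD.2 b).2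

theorem phi_le_hull [Preorder D] [Preorder D'] (hD : IsFuzzyDomain D)
    (hD' : IsFuzzyDomain D') (φ : D → D' → L) (hφ : ∀ a : D, IsMonPred (φ a))
    (hsc : ScottContTo φ) (a : D) :
    φ a ≤ uHull (L := L) (fun c => ⨆ a' ∈ {a' | WayBelow a' a}, φ a' c) := by
  have hmp : IsMonPred (uHull (L := L) (fun c => ⨆ a' ∈ {a' | WayBelow a' a}, φ a' c)) :=
    uHull_monpred hD' _
  refine (hsc {a' | WayBelow a' a} (wb_nonempty hD a) (hD.2 a).1 a (hD.2 a).2).2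
    _ hmp ?_
  intro d hd b'
  calc φ d b' = ⨅ c ∈ {c | WayBelow c b'}, φ d c := monpred_inf hD' (hφ d) b'
    _ ≤ uHull (L := L) (fun c => ⨆ a' ∈ {a' | WayBelow a' a}, φ a' c) b' := by
        simp only [uHull]
        exact iInf₂_mono fun c _ =>
          le_iSup₂ (f := fun (a' : D) (_ : a' ∈ {a' | WayBelow a' a}) => φ a' c) d hd

end Aux

theorem stmt_17 [PartialOrder D] [PartialOrder D'] [CompletelyDistribLattice L]
    (hD : IsFuzzyDomain D) (hD' : IsFuzzyDomain D') (mul : L → L → L)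
    (hassoc : ∀ a b c : L, mul (mul a b) c = mul a (mul b c))
    (hone : ∀ a : L, mul ⊤ a = a ∧ mul a ⊤ = a)
    (hsup₁ : ∀ (a : L) (S : Set L), mul a (sSup S) = ⨆ b ∈ S, mul a b)
    (hsup₂ : ∀ (a : L) (S : Set L), mul (sSup S) a = ⨆ b ∈ S, mul b a)
    (φ : D → D' → L) (hφ : ∀ a : D, IsMonPred (φ a)) (hsc : ScottContTo φ)
    (α : L) (m : D → L) (hm : IsMonPred m) :
    sp mul φ (smulMP mul α m) = smulMP mul α (sp mul φ m) := by
  funext b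
  have hGanti : Antitone (fun c : D' => ⨆ a : D, mul (m a) (φ a c)) := by
    intro c₁ c₂ h
    exact iSup_mono fun a => mul_mono_right hsup₁ ((hφ a).1 h)
  have key1 : ∀ x : D, mul α (m x) ≤ smulMP mul α m x := fun x =>
    le_smulMP fun a' ha' => mul_mono_right hsup₁ (hm.1 (wb_le ha'))
  have h1 : (⨅ b' ∈ {b' | WayBelow b' b}, mul α (⨆ a : D, mul (m a) (φ a b'))) ≤
      sp mul φ (smulMP mul α m) b := by
    refine le_sp fun b' hb' => ?_
    calc (⨅ c ∈ {b' | WayBelow b' b}, mul α (⨆ a : D, mul (m a) (φ a c)))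
        ≤ mul α (⨆ a : D, mul (m a) (φ a b')) := iInf_le_of_le b' (iInf_le _ hb')
      _ = ⨆ a : D, mul α (mul (m a) (φ a b')) := mul_iSup' hsup₁ α _
      _ ≤ ⨆ a : D, mul (smulMP mul α m a) (φ a b') := by
          refine iSup_mono fun a => ?_
          rw [← hassoc]
          exact mul_mono_left hsup₂ (key1 a)
  have h2 : sp mul φ (smulMP mul α m) b ≤
      ⨅ b' ∈ {b' | WayBelow b' b}, mul α (⨆ a : D, mul (m a) (φ a b')) := by
    refine le_iInf₂ fun b'' hb'' => ?_
    obtain ⟨b', hb2, hb1⟩ := wb_interp hD' hb''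
    calc sp mul φ (smulMP mul α m) b
        ≤ ⨆ a : D, mul (smulMP mul α m a) (φ a b') := sp_le hb1
      _ ≤ mul α (⨆ a : D, mul (m a) (φ a b'')) := by
          refine iSup_le fun a => ?_
          have hφa : φ a b' ≤ ⨆ a' ∈ {a' | WayBelow a' a}, φ a' b'' :=
            (phi_le_hull hD hD' φ hφ hsc a b').trans (uHull_le hb2)
          calc mul (smulMP mul α m a) (φ a b')
              ≤ mul (smulMP mul α m a) (⨆ a' ∈ {a' | WayBelow a' a}, φ a' b'') :=
                mul_mono_right hsup₁ hφa
            _ = ⨆ a' ∈ {a' | WayBelow a' a}, mul (smulMP mul α m a) (φ a' b'') := by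
                rw [mul_iSup' hsup₁]
                exact iSup_congr fun a' => mul_iSup' hsup₁ _ _
            _ ≤ mul α (⨆ a : D, mul (m a) (φ a b'')) := by
                refine iSup₂_le fun a' ha' => ?_
                calc mul (smulMP mul α m a) (φ a' b'')
                    ≤ mul (mul α (m a')) (φ a' b'') := mul_mono_left hsup₂ (smulMP_le ha')
                  _ = mul α (mul (m a') (φ a' b'')) := hassoc _ _ _
                  _ ≤ mul α (⨆ a : D, mul (m a) (φ a b'')) :=
                      mul_mono_right hsup₁ (le_iSup (fun a : D => mul (m a) (φ a b'')) a')
  have h3 : (⨅ b' ∈ {b' | WayBelow b' b}, mul α (⨆ a : D, mul (m a) (φ a b'))) ≤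
      smulMP mul α (sp mul φ m) b := by
    refine le_smulMP fun b' hb' => ?_
    calc (⨅ c ∈ {b' | WayBelow b' b}, mul α (⨆ a : D, mul (m a) (φ a c)))
        ≤ mul α (⨆ a : D, mul (m a) (φ a b')) := iInf_le_of_le b' (iInf_le _ hb')
      _ ≤ mul α (sp mul φ m b') := by
          refine mul_mono_right hsup₁ ?_
          exact le_sp fun b'' hb'' => hGanti (wb_le hb'')
  have h4 : smulMP mul α (sp mul φ m) b ≤
      ⨅ b' ∈ {b' | WayBelow b' b}, mul α (⨆ a : D, mul (m a) (φ a b')) := by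
    refine le_iInf₂ fun b'' hb'' => ?_
    obtain ⟨b', hb2, hb1⟩ := wb_interp hD' hb''
    calc smulMP mul α (sp mul φ m) b ≤ mul α (sp mul φ m b') := smulMP_le hb1
      _ ≤ mul α (⨆ a : D, mul (m a) (φ a b'')) := mul_mono_right hsup₁ (sp_le hb2)
  exact le_antisymm (h2.trans h3) (h4.trans h1)
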